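/- Let (G,σ) be a connected connection graph. Then for any distinct i,j∈V, the connection effective resistance satisfies r^σ_{ij} ≤ r_{ij}, where r_{ij} is the classical effective resistance between i and j in the underlying graph G. -/

import Mathlib

noncomputable section

open Matrix

/-- The simple graph underlying a weight matrix: vertices are adjacent iff the
connecting weight is positive. -/
def graphOf {n : ℕ} (W : Matrix (Fin n) (Fin n) ℝ) : SimpleGraph (Fin n) :=
  SimpleGraph.fromRel (fun i j => 0 < W i j)

/-- `W` is a valid edge-weight matrix: symmetric, zero diagonal, nonnegative entries. -/
def IsWeight {n : ℕ} (W : Matrix (Fin n) (Fin n) ℝ) : Prop :=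
  W.IsSymm ∧ (∀ i, W i i = 0) ∧ (∀ i j, 0 ≤ W i j)

/-- `σ` is a signature on the graph of `W`: it assigns an orthogonal matrix to every
oriented edge, compatibly with the orientation reversal. -/
def IsSignature {n : ℕ} {ι : Type} [Fintype ι] [DecidableEq ι]
    (W : Matrix (Fin n) (Fin n) ℝ) (σ : Fin n → Fin n → Matrix ι ι ℝ) : Prop :=
  (∀ i j, 0 < W i j → (σ i j)ᵀ * σ i j = 1) ∧
  (∀ i j, 0 < W i j → σ j i = (σ i j)ᵀ)

/-- The connection Laplacian of `(W, σ)`: the `(i,i)` block is `deg(i) • I`, the `(i,j)`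
block is `-w_{ij} σ_{ij}`. -/
def connLap {n : ℕ} {ι : Type} [Fintype ι] [DecidableEq ι]
    (W : Matrix (Fin n) (Fin n) ℝ) (σ : Fin n → Fin n → Matrix ι ι ℝ) :
    Matrix (Fin n × ι) (Fin n × ι) ℝ :=
  Matrix.of fun p q =>
    (if p = q then ∑ k, W p.1 k else 0) - W p.1 q.1 * σ p.1 q.1 p.2 q.2

/-- The embedding of the pair index `{i,j}` (as `Fin 2`) into the vertex set. -/
def pairEmb {n : ℕ} {ι : Type} (i j : Fin n) : Fin 2 × ι → Fin n × ι :=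
  fun p => (if p.1 = 0 then i else j, p.2)

/-- The embedding of the complement `{i,j}^c` into the vertex set. -/
def restEmb {n : ℕ} {ι : Type} (i j : Fin n) :
    {k : Fin n // k ≠ i ∧ k ≠ j} × ι → Fin n × ι :=
  fun p => ((p.1 : Fin n), p.2)

/-- The connection conductance matrix of the pair `(i,j)`: the Schur complement
`L/L_{{i,j}^c,{i,j}^c}` of the connection Laplacian. -/
noncomputable def conduct {n : ℕ} {ι : Type} [Fintype ι] [DecidableEq ι]
    (W : Matrix (Fin n) (Fin n) ℝ) (σ : Fin n → Fin n → Matrix ι ι ℝ)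
    (i j : Fin n) : Matrix (Fin 2 × ι) (Fin 2 × ι) ℝ :=
  (connLap W σ).submatrix (pairEmb i j) (pairEmb i j) -
    (connLap W σ).submatrix (pairEmb i j) (restEmb i j) *
      ((connLap W σ).submatrix (restEmb i j) (restEmb i j))⁻¹ *
      (connLap W σ).submatrix (restEmb i j) (pairEmb i j)

/-- The `(a,b)` block (each of size `d × d`) of a `2d × 2d` matrix. -/
def blockOf {ι : Type} (C : Matrix (Fin 2 × ι) (Fin 2 × ι) ℝ) (a b : Fin 2) :
    Matrix ι ι ℝ :=
  Matrix.of fun x y => C (a, x) (b, y)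

/-- `X` is the Moore–Penrose pseudoinverse of `A`. -/
def IsMP {m : Type} [Fintype m] (A X : Matrix m m ℝ) : Prop :=
  A * X * A = A ∧ X * A * X = X ∧ (A * X)ᵀ = A * X ∧ (X * A)ᵀ = X * A

/-- The ordinary graph Laplacian `L = D - W`. -/
def lap {n : ℕ} (W : Matrix (Fin n) (Fin n) ℝ) : Matrix (Fin n) (Fin n) ℝ :=
  Matrix.of fun i k => (if i = k then ∑ l, W i l else 0) - W i k

/-- The classical effective resistance `r_{ij} = (e_i - e_j)ᵀ Y (e_i - e_j)` computed from a
pseudoinverse `Y` of the graph Laplacian. -/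
def rOf {n : ℕ} (Y : Matrix (Fin n) (Fin n) ℝ) (i j : Fin n) : ℝ :=
  (Pi.single i 1 - Pi.single j 1) ⬝ᵥ (Y *ᵥ (Pi.single i 1 - Pi.single j 1))

/-- The connection effective resistance
`r^σ_{ij} = (1/(2d)) (Tr (C_{ii}⁻¹) + Tr (C_{jj}⁻¹))`. -/
noncomputable def rConn {n d : ℕ} (W : Matrix (Fin n) (Fin n) ℝ)
    (σ : Fin n → Fin n → Matrix (Fin d) (Fin d) ℝ) (i j : Fin n) : ℝ :=
  (1 / (2 * (d : ℝ))) *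
    (Matrix.trace ((blockOf (conduct W σ i j) 0 0)⁻¹) +
     Matrix.trace ((blockOf (conduct W σ i j) 1 1)⁻¹))


set_option linter.unusedSectionVars false
set_option linter.unusedVariables false
set_option maxHeartbeats 1000000

section Schur

variable {m p r : Type} [Fintype m] [Fintype p] [Fintype r]

/-- glue two vectors along a bijection decomposition -/
noncomputable def glueV (a : p → m) (b : r → m)
    (hbij : Function.Bijective (Sum.elim a b)) (x : p → ℝ) (y : r → ℝ) : m → ℝ :=
  Sum.elim x y ∘ (Equiv.ofBijective _ hbij).symm

lemma glueV_a (a : p → m) (b : r → m) (hbij : Function.Bijective (Sum.elim a b))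
    (x : p → ℝ) (y : r → ℝ) (w : p) : glueV a b hbij x y (a w) = x w := by
  show Sum.elim x y ((Equiv.ofBijective _ hbij).symm (a w)) = x w
  have : a w = (Equiv.ofBijective _ hbij) (Sum.inl w) := rfl
  rw [this, Equiv.symm_apply_apply]
  rfl

lemma glueV_b (a : p → m) (b : r → m) (hbij : Function.Bijective (Sum.elim a b))
    (x : p → ℝ) (y : r → ℝ) (z : r) : glueV a b hbij x y (b z) = y z := by
  show Sum.elim x y ((Equiv.ofBijective _ hbij).symm (b z)) = y z
  have : b z = (Equiv.ofBijective _ hbij) (Sum.inr z) := rfl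
  rw [this, Equiv.symm_apply_apply]
  rfl

lemma glueV_eta (a : p → m) (b : r → m) (hbij : Function.Bijective (Sum.elim a b))
    (v : m → ℝ) : glueV a b hbij (v ∘ a) (v ∘ b) = v := by
  funext q
  obtain ⟨s, rfl⟩ := hbij.surjective q
  cases s with
  | inl w => rw [show Sum.elim a b (Sum.inl w) = a w from rfl, glueV_a]; rfl
  | inr z => rw [show Sum.elim a b (Sum.inr z) = b z from rfl, glueV_b]; rfl

lemma mulVec_glueV (M : Matrix m m ℝ) (a : p → m) (b : r → m)
    (hbij : Function.Bijective (Sum.elim a b)) (x : p → ℝ) (y : r → ℝ) (q : m) :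
    (M *ᵥ glueV a b hbij x y) q
      = (M.submatrix (fun _ : Unit => q) a *ᵥ x) () + (M.submatrix (fun _ : Unit => q) b *ᵥ y) () := by
  show (fun t => M q t) ⬝ᵥ glueV a b hbij x y = _
  rw [show (fun t => M q t) ⬝ᵥ glueV a b hbij x y
      = ∑ t, M q t * glueV a b hbij x y t from rfl]
  rw [← Fintype.sum_bijective _ hbij
    (fun s => M q (Sum.elim a b s) * glueV a b hbij x y (Sum.elim a b s)) _ (fun s => rfl)]
  rw [Fintype.sum_sum_type]
  simp only [Sum.elim_inl, Sum.elim_inr, glueV_a, glueV_b]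
  rfl

lemma dot_glueV (a : p → m) (b : r → m) (hbij : Function.Bijective (Sum.elim a b))
    (x : p → ℝ) (y : r → ℝ) (v : m → ℝ) :
    glueV a b hbij x y ⬝ᵥ v = x ⬝ᵥ (v ∘ a) + y ⬝ᵥ (v ∘ b) := by
  rw [show glueV a b hbij x y ⬝ᵥ v = ∑ t, glueV a b hbij x y t * v t from rfl]
  rw [← Fintype.sum_bijective _ hbij
    (fun s => glueV a b hbij x y (Sum.elim a b s) * v (Sum.elim a b s)) _ (fun s => rfl)]
  rw [Fintype.sum_sum_type]
  simp only [Sum.elim_inl, Sum.elim_inr, glueV_a, glueV_b]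
  rfl

lemma quad_decomp (M : Matrix m m ℝ) (a : p → m) (b : r → m)
    (hbij : Function.Bijective (Sum.elim a b)) (x : p → ℝ) (y : r → ℝ) :
    glueV a b hbij x y ⬝ᵥ (M *ᵥ glueV a b hbij x y)
      = x ⬝ᵥ (M.submatrix a a *ᵥ x) + x ⬝ᵥ (M.submatrix a b *ᵥ y)
        + (y ⬝ᵥ (M.submatrix b a *ᵥ x) + y ⬝ᵥ (M.submatrix b b *ᵥ y)) := by
  rw [dot_glueV]
  congr 1
  · have : (M *ᵥ glueV a b hbij x y) ∘ a
        = (M.submatrix a a *ᵥ x) + (M.submatrix a b *ᵥ y) := by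
      funext w
      have := mulVec_glueV M a b hbij x y (a w)
      simpa [mulVec, dotProduct, submatrix] using this
    rw [this, dotProduct_add]
  · have : (M *ᵥ glueV a b hbij x y) ∘ b
        = (M.submatrix b a *ᵥ x) + (M.submatrix b b *ᵥ y) := by
      funext z
      have := mulVec_glueV M a b hbij x y (b z)
      simpa [mulVec, dotProduct, submatrix] using this
    rw [this, dotProduct_add]

end Schur

section Schur2

variable {m p r : Type} [Fintype m] [Fintype p] [Fintype r] [DecidableEq r]

lemma block_identity (A : Matrix p p ℝ) (B : Matrix p r ℝ) (D : Matrix r r ℝ)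
    (hDs : Dᵀ = D) (hD : IsUnit D.det) (x : p → ℝ) (y : r → ℝ) :
    x ⬝ᵥ (A *ᵥ x) + x ⬝ᵥ (B *ᵥ y) + (y ⬝ᵥ (Bᵀ *ᵥ x) + y ⬝ᵥ (D *ᵥ y))
      = x ⬝ᵥ ((A - B * D⁻¹ * Bᵀ) *ᵥ x)
        + (y + D⁻¹ *ᵥ (Bᵀ *ᵥ x)) ⬝ᵥ (D *ᵥ (y + D⁻¹ *ᵥ (Bᵀ *ᵥ x))) := by
  set w := Bᵀ *ᵥ x with hw
  set u := D⁻¹ *ᵥ w with hu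
  have hDu : D *ᵥ u = w := by
    rw [hu, mulVec_mulVec, Matrix.mul_nonsing_inv _ hD, one_mulVec]
  have h1 : x ⬝ᵥ (B *ᵥ y) = w ⬝ᵥ y := by
    rw [dotProduct_mulVec, ← mulVec_transpose]
  have h2 : x ⬝ᵥ ((A - B * D⁻¹ * Bᵀ) *ᵥ x) = x ⬝ᵥ (A *ᵥ x) - w ⬝ᵥ u := by
    rw [sub_mulVec, dotProduct_sub]
    congr 1
    rw [← mulVec_mulVec, ← mulVec_mulVec, ← hw, ← hu, dotProduct_mulVec, ← mulVec_transpose]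
  have h3 : u ⬝ᵥ (D *ᵥ y) = w ⬝ᵥ y := by
    rw [dotProduct_mulVec, ← mulVec_transpose, hDs, hDu]
  have h4 : u ⬝ᵥ (D *ᵥ u) = w ⬝ᵥ u := by rw [hDu]; exact dotProduct_comm _ _
  have h5 : y ⬝ᵥ (D *ᵥ u) = y ⬝ᵥ w := by rw [hDu]
  rw [mulVec_add, dotProduct_add, add_dotProduct, add_dotProduct, h2, h3, h4, h5, h1]
  have h6 : y ⬝ᵥ w = w ⬝ᵥ y := dotProduct_comm _ _
  rw [h6]; ring

variable (M : Matrix m m ℝ) (a : p → m) (b : r → m)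

lemma schur_psd_le (hbij : Function.Bijective (Sum.elim a b)) (hsym : Mᵀ = M)
    (hD : IsUnit (M.submatrix b b).det)
    (hDpsd : ∀ z : r → ℝ, 0 ≤ z ⬝ᵥ (M.submatrix b b *ᵥ z)) (v : m → ℝ) :
    (v ∘ a) ⬝ᵥ ((M.submatrix a a - M.submatrix a b * (M.submatrix b b)⁻¹ * M.submatrix b a) *ᵥ (v ∘ a))
      ≤ v ⬝ᵥ (M *ᵥ v) := by
  have hBt : M.submatrix b a = (M.submatrix a b)ᵀ := by
    rw [transpose_submatrix, hsym]
  have hDs : (M.submatrix b b)ᵀ = M.submatrix b b := by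
    rw [transpose_submatrix, hsym]
  have hv : v = glueV a b hbij (v ∘ a) (v ∘ b) := (glueV_eta a b hbij v).symm
  calc (v ∘ a) ⬝ᵥ ((M.submatrix a a - M.submatrix a b * (M.submatrix b b)⁻¹ * M.submatrix b a) *ᵥ (v ∘ a))
      ≤ (v ∘ a) ⬝ᵥ ((M.submatrix a a - M.submatrix a b * (M.submatrix b b)⁻¹ * M.submatrix b a) *ᵥ (v ∘ a))
        + ((v ∘ b) + (M.submatrix b b)⁻¹ *ᵥ ((M.submatrix a b)ᵀ *ᵥ (v ∘ a))) ⬝ᵥ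
          (M.submatrix b b *ᵥ ((v ∘ b) + (M.submatrix b b)⁻¹ *ᵥ ((M.submatrix a b)ᵀ *ᵥ (v ∘ a)))) := by
        exact le_add_of_nonneg_right (hDpsd _)
    _ = v ⬝ᵥ (M *ᵥ v) := by
        conv_rhs => rw [hv]
        rw [quad_decomp M a b hbij]
        rw [hBt, block_identity _ _ _ hDs hD]

lemma schur_exists (hbij : Function.Bijective (Sum.elim a b)) (hsym : Mᵀ = M)
    (hD : IsUnit (M.submatrix b b).det) (x : p → ℝ) :
    ∃ v : m → ℝ, (∀ w, v (a w) = x w) ∧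
      (∀ w, (M *ᵥ v) (a w)
        = ((M.submatrix a a - M.submatrix a b * (M.submatrix b b)⁻¹ * M.submatrix b a) *ᵥ x) w) ∧
      (∀ z, (M *ᵥ v) (b z) = 0) ∧
      v ⬝ᵥ (M *ᵥ v)
        = x ⬝ᵥ ((M.submatrix a a - M.submatrix a b * (M.submatrix b b)⁻¹ * M.submatrix b a) *ᵥ x) := by
  have hBt : M.submatrix b a = (M.submatrix a b)ᵀ := by
    rw [transpose_submatrix, hsym]
  have hDs : (M.submatrix b b)ᵀ = M.submatrix b b := by
    rw [transpose_submatrix, hsym]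
  have hDu : M.submatrix b b *ᵥ ((M.submatrix b b)⁻¹ *ᵥ ((M.submatrix a b)ᵀ *ᵥ x))
      = (M.submatrix a b)ᵀ *ᵥ x := by
    rw [mulVec_mulVec, Matrix.mul_nonsing_inv _ hD, one_mulVec]
  have hBu : M.submatrix a b *ᵥ ((M.submatrix b b)⁻¹ *ᵥ ((M.submatrix a b)ᵀ *ᵥ x))
      = (M.submatrix a b * (M.submatrix b b)⁻¹ * M.submatrix b a) *ᵥ x := by
    rw [hBt, mulVec_mulVec, mulVec_mulVec]
  refine ⟨glueV a b hbij x (-((M.submatrix b b)⁻¹ *ᵥ ((M.submatrix a b)ᵀ *ᵥ x))),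
    fun w => glueV_a a b hbij _ _ w, ?_, ?_, ?_⟩
  · intro w
    rw [mulVec_glueV M a b hbij]
    have h1 : (M.submatrix (fun _ : Unit => a w) a *ᵥ x) () = (M.submatrix a a *ᵥ x) w := rfl
    have h2 : (M.submatrix (fun _ : Unit => a w) b *ᵥ
        (-((M.submatrix b b)⁻¹ *ᵥ ((M.submatrix a b)ᵀ *ᵥ x)))) ()
        = (M.submatrix a b *ᵥ (-((M.submatrix b b)⁻¹ *ᵥ ((M.submatrix a b)ᵀ *ᵥ x)))) w := rfl
    rw [h1, h2, mulVec_neg, hBu, sub_mulVec]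
    simp [sub_eq_add_neg]
  · intro z
    rw [mulVec_glueV M a b hbij]
    have h1 : (M.submatrix (fun _ : Unit => b z) a *ᵥ x) () = (M.submatrix b a *ᵥ x) z := rfl
    have h2 : (M.submatrix (fun _ : Unit => b z) b *ᵥ
        (-((M.submatrix b b)⁻¹ *ᵥ ((M.submatrix a b)ᵀ *ᵥ x)))) ()
        = (M.submatrix b b *ᵥ (-((M.submatrix b b)⁻¹ *ᵥ ((M.submatrix a b)ᵀ *ᵥ x)))) z := rfl
    rw [h1, h2, mulVec_neg, hDu, hBt]
    simp
  · rw [quad_decomp M a b hbij, hBt, block_identity _ _ _ hDs hD]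
    have h0 : -((M.submatrix b b)⁻¹ *ᵥ ((M.submatrix a b)ᵀ *ᵥ x))
        + (M.submatrix b b)⁻¹ *ᵥ ((M.submatrix a b)ᵀ *ᵥ x) = 0 := neg_add_cancel _
    rw [h0]
    simp

end Schur2


section Energy

lemma quad_expand {m : Type} [Fintype m] [DecidableEq m] (dg : m → ℝ) (off : Matrix m m ℝ)
    (v : m → ℝ) :
    v ⬝ᵥ ((Matrix.of fun p q => (if p = q then dg p else 0) - off p q) *ᵥ v)
      = ∑ p, dg p * (v p * v p) - ∑ p, ∑ q, off p q * (v p * v q) := by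
  have h : ∀ p, ((Matrix.of fun p q => (if p = q then dg p else 0) - off p q) *ᵥ v) p
      = dg p * v p - ∑ q, off p q * v q := by
    intro p
    simp only [mulVec, dotProduct, Matrix.of_apply, sub_mul, ite_mul, zero_mul,
      Finset.sum_sub_distrib, Finset.sum_ite_eq, Finset.mem_univ, if_true]
  simp only [dotProduct, h, mul_sub, Finset.mul_sum, Finset.sum_sub_distrib]
  congr 1
  · exact Finset.sum_congr rfl fun p _ => by ring
  · exact Finset.sum_congr rfl fun p _ => Finset.sum_congr rfl fun q _ => by ring

lemma lap_quad {n : ℕ} (W : Matrix (Fin n) (Fin n) ℝ) (g : Fin n → ℝ) :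
    g ⬝ᵥ (lap W *ᵥ g)
      = ∑ u, (∑ l, W u l) * (g u * g u) - ∑ u, ∑ v, W u v * (g u * g v) :=
  quad_expand _ _ g

lemma connLap_quad {n : ℕ} {ι : Type} [Fintype ι] [DecidableEq ι]
    (W : Matrix (Fin n) (Fin n) ℝ) (σ : Fin n → Fin n → Matrix ι ι ℝ)
    (f : Fin n × ι → ℝ) :
    f ⬝ᵥ (connLap W σ *ᵥ f)
      = ∑ p, (∑ k, W p.1 k) * (f p * f p)
        - ∑ p, ∑ q, (W p.1 q.1 * σ p.1 q.1 p.2 q.2) * (f p * f q) :=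
  quad_expand _ _ f

lemma lap_quad_sym {n : ℕ} (W : Matrix (Fin n) (Fin n) ℝ) (hs : W.IsSymm) (g : Fin n → ℝ) :
    g ⬝ᵥ (lap W *ᵥ g)
      = (1/2) * ∑ u, ∑ v, W u v * ((g u - g v) * (g u - g v)) := by
  have hsym : ∀ u v, W u v = W v u := fun u v => by
    have h := congrFun (congrFun hs u) v
    rw [Matrix.transpose_apply] at h
    exact h.symm
  rw [lap_quad]
  have hA : ∑ u, (∑ l, W u l) * (g u * g u) = ∑ u, ∑ v, W u v * (g u * g u) := by
    exact Finset.sum_congr rfl fun u _ => Finset.sum_mul ..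
  have hswap : ∑ u, ∑ v, W u v * (g v * g v) = ∑ u, ∑ v, W u v * (g u * g u) := by
    rw [Finset.sum_comm]
    exact Finset.sum_congr rfl fun v _ => Finset.sum_congr rfl fun u _ => by rw [hsym u v]
  have expand : ∑ u, ∑ v, W u v * ((g u - g v) * (g u - g v))
      = ∑ u, ∑ v, W u v * (g u * g u) + ∑ u, ∑ v, W u v * (g v * g v)
        - 2 * ∑ u, ∑ v, W u v * (g u * g v) := by
    have h : ∀ u v, W u v * ((g u - g v) * (g u - g v))
        = W u v * (g u * g u) + W u v * (g v * g v) - 2 * (W u v * (g u * g v)) := by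
      intros; ring
    simp only [h, Finset.sum_add_distrib, Finset.sum_sub_distrib, ← Finset.mul_sum]
  rw [expand, hswap, hA]
  ring

lemma lap_psd {n : ℕ} (W : Matrix (Fin n) (Fin n) ℝ) (hW : IsWeight W) (g : Fin n → ℝ) :
    0 ≤ g ⬝ᵥ (lap W *ᵥ g) := by
  rw [lap_quad_sym W hW.1]
  have : 0 ≤ ∑ u, ∑ v, W u v * ((g u - g v) * (g u - g v)) :=
    Finset.sum_nonneg fun u _ => Finset.sum_nonneg fun v _ =>
      mul_nonneg (hW.2.2 u v) (mul_self_nonneg _)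
  linarith

lemma lap_zero_const {n : ℕ} (W : Matrix (Fin n) (Fin n) ℝ) (hW : IsWeight W)
    (hconn : (graphOf W).Connected) (g : Fin n → ℝ)
    (hg : g ⬝ᵥ (lap W *ᵥ g) = 0) : ∀ u v, g u = g v := by
  have hsym : ∀ u v, W u v = W v u := fun u v => by
    have h := congrFun (congrFun hW.1 u) v
    rw [Matrix.transpose_apply] at h
    exact h.symm
  rw [lap_quad_sym W hW.1] at hg
  have hterm : ∀ u v, W u v * ((g u - g v) * (g u - g v)) = 0 := by
    have h1 : ∑ u, ∑ v, W u v * ((g u - g v) * (g u - g v)) = 0 := by linarith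
    have h2 := (Finset.sum_eq_zero_iff_of_nonneg (fun u _ => Finset.sum_nonneg fun v _ =>
      mul_nonneg (hW.2.2 u v) (mul_self_nonneg _))).mp h1
    intro u v
    have h3 := (Finset.sum_eq_zero_iff_of_nonneg (fun v _ =>
      mul_nonneg (hW.2.2 u v) (mul_self_nonneg _))).mp (h2 u (Finset.mem_univ u))
    exact h3 v (Finset.mem_univ v)
  have hadj : ∀ u v, (graphOf W).Adj u v → g u = g v := by
    intro u v huv
    rw [graphOf, SimpleGraph.fromRel_adj] at huv
    have hWuv : 0 < W u v := by
      rcases huv.2 with h | h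
      · exact h
      · rw [hsym u v]; exact h
    have := hterm u v
    have h4 : (g u - g v) * (g u - g v) = 0 := by
      rcases mul_eq_zero.mp this with h | h
      · exact absurd h (ne_of_gt hWuv)
      · exact h
    have := mul_self_eq_zero.mp h4
    linarith
  intro u v
  obtain ⟨wk⟩ := hconn.preconnected u v
  induction wk with
  | nil => rfl
  | cons h p ih => exact (hadj _ _ h).trans ih

/-- the vertex-wise norm of a connection vector field -/
noncomputable def nrm {n : ℕ} {ι : Type} [Fintype ι] (f : Fin n × ι → ℝ) (u : Fin n) : ℝ :=
  Real.sqrt (∑ k, f (u, k) * f (u, k))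

lemma nrm_sq {n : ℕ} {ι : Type} [Fintype ι] (f : Fin n × ι → ℝ) (u : Fin n) :
    nrm f u * nrm f u = ∑ k, f (u, k) * f (u, k) :=
  Real.mul_self_sqrt (Finset.sum_nonneg fun k _ => mul_self_nonneg _)

lemma nrm_nonneg {n : ℕ} {ι : Type} [Fintype ι] (f : Fin n × ι → ℝ) (u : Fin n) :
    0 ≤ nrm f u := Real.sqrt_nonneg _

lemma nrm_eq_zero {n : ℕ} {ι : Type} [Fintype ι] (f : Fin n × ι → ℝ) (u : Fin n)
    (h : nrm f u = 0) : ∀ k, f (u, k) = 0 := by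
  intro k
  have h2 : ∑ l, f (u, l) * f (u, l) = 0 := by
    have := nrm_sq f u; rw [h] at this; linarith
  have h3 := (Finset.sum_eq_zero_iff_of_nonneg (fun l _ => mul_self_nonneg (f (u, l)))).mp h2
  exact mul_self_eq_zero.mp (h3 k (Finset.mem_univ k))

/-- Cauchy-Schwarz + orthogonality: the cross term bound -/
lemma cross_bound {n : ℕ} {ι : Type} [Fintype ι] [DecidableEq ι]
    (W : Matrix (Fin n) (Fin n) ℝ) (σ : Fin n → Fin n → Matrix ι ι ℝ)
    (hσ : IsSignature W σ) (f : Fin n × ι → ℝ) (u v : Fin n) (huv : 0 < W u v) :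
    ∑ k, ∑ l, σ u v k l * (f (u, k) * f (v, l)) ≤ nrm f u * nrm f v := by
  set h : ι → ℝ := σ u v *ᵥ fun l => f (v, l) with hh
  have hsum : ∑ k, ∑ l, σ u v k l * (f (u, k) * f (v, l)) = ∑ k, f (u, k) * h k := by
    refine Finset.sum_congr rfl fun k _ => ?_
    rw [hh]
    simp only [mulVec, dotProduct, Finset.mul_sum]
    exact Finset.sum_congr rfl fun l _ => by ring
  have hnormh : ∑ k, h k * h k = ∑ l, f (v, l) * f (v, l) := by
    have e1 : ∑ k, h k * h k = h ⬝ᵥ h := rfl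
    have e2 : h ⬝ᵥ h = (fun l => f (v, l)) ⬝ᵥ (fun l => f (v, l)) := by
      rw [hh, dotProduct_mulVec, ← mulVec_transpose, mulVec_mulVec, hσ.1 u v huv, one_mulVec]
    rw [e1, e2]; rfl
  rw [hsum]
  have cs : (∑ k, f (u, k) * h k) ^ 2 ≤ (∑ k, f (u, k) ^ 2) * (∑ k, h k ^ 2) :=
    Finset.sum_mul_sq_le_sq_mul_sq _ _ _
  have e3 : ∑ k, f (u, k) ^ 2 = nrm f u * nrm f u := by
    rw [nrm_sq]; exact Finset.sum_congr rfl fun k _ => sq (f (u,k)) ▸ by ring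
  have e4 : ∑ k, h k ^ 2 = nrm f v * nrm f v := by
    rw [nrm_sq, ← hnormh]; exact Finset.sum_congr rfl fun k _ => by ring
  calc ∑ k, f (u, k) * h k ≤ |∑ k, f (u, k) * h k| := le_abs_self _
    _ = Real.sqrt ((∑ k, f (u, k) * h k) ^ 2) := (Real.sqrt_sq_eq_abs _).symm
    _ ≤ Real.sqrt ((∑ k, f (u, k) ^ 2) * (∑ k, h k ^ 2)) := Real.sqrt_le_sqrt cs
    _ = nrm f u * nrm f v := by
        rw [e3, e4]
        rw [show nrm f u * nrm f u * (nrm f v * nrm f v)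
            = (nrm f u * nrm f v) * (nrm f u * nrm f v) by ring]
        exact Real.sqrt_mul_self (mul_nonneg (nrm_nonneg f u) (nrm_nonneg f v))

/-- key comparison: connection energy dominates scalar energy of norms -/
lemma conn_ge_scalar {n : ℕ} {ι : Type} [Fintype ι] [DecidableEq ι]
    (W : Matrix (Fin n) (Fin n) ℝ) (hW : IsWeight W)
    (σ : Fin n → Fin n → Matrix ι ι ℝ) (hσ : IsSignature W σ) (f : Fin n × ι → ℝ) :
    nrm f ⬝ᵥ (lap W *ᵥ nrm f) ≤ f ⬝ᵥ (connLap W σ *ᵥ f) := by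
  rw [lap_quad, connLap_quad]
  have hdiag : ∑ u, (∑ l, W u l) * (nrm f u * nrm f u)
      = ∑ p : Fin n × ι, (∑ k, W p.1 k) * (f p * f p) := by
    rw [Fintype.sum_prod_type]
    refine Finset.sum_congr rfl fun u _ => ?_
    rw [nrm_sq, Finset.mul_sum]
  have hcross : ∑ p : Fin n × ι, ∑ q : Fin n × ι, (W p.1 q.1 * σ p.1 q.1 p.2 q.2) * (f p * f q)
      ≤ ∑ u, ∑ v, W u v * (nrm f u * nrm f v) := by
    have lhs_eq : ∑ p : Fin n × ι, ∑ q : Fin n × ι, (W p.1 q.1 * σ p.1 q.1 p.2 q.2) * (f p * f q)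
        = ∑ u, ∑ v, W u v * (∑ k, ∑ l, σ u v k l * (f (u, k) * f (v, l))) := by
      simp only [Fintype.sum_prod_type, Finset.mul_sum]
      refine Finset.sum_congr rfl fun u _ => ?_
      rw [Finset.sum_comm]
      exact Finset.sum_congr rfl fun v _ => Finset.sum_congr rfl fun k _ =>
        Finset.sum_congr rfl fun l _ => by ring
    rw [lhs_eq]
    refine Finset.sum_le_sum fun u _ => Finset.sum_le_sum fun v _ => ?_
    rcases lt_or_eq_of_le (hW.2.2 u v) with h | h
    · exact mul_le_mul_of_nonneg_left (cross_bound W σ hσ f u v h) (le_of_lt h)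
    · rw [← h, zero_mul, zero_mul]
  linarith [hdiag, hcross]

end Energy


/-- scalar pair embedding -/
def aS {n : ℕ} (i j : Fin n) : Fin 2 → Fin n := fun t => if t = 0 then i else j

lemma aS_zero {n : ℕ} (i j : Fin n) : aS i j 0 = i := rfl
lemma aS_one {n : ℕ} (i j : Fin n) : aS i j 1 = j := rfl

lemma bij_s {n : ℕ} (i j : Fin n) (hij : i ≠ j) :
    Function.Bijective (Sum.elim (aS i j) (Subtype.val : {k : Fin n // k ≠ i ∧ k ≠ j} → Fin n)) := by
  constructor
  · rintro (w | z) (w' | z') h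
    · simp only [Sum.elim_inl] at h
      congr 1
      fin_cases w <;> fin_cases w' <;> simp [aS] at h ⊢ <;>
        first | rfl | exact absurd h hij | exact absurd h.symm hij
    · simp only [Sum.elim_inl, Sum.elim_inr] at h
      exfalso; fin_cases w
      · exact z'.2.1 ((by simpa [aS] using h : i = (z' : Fin n))).symm
      · exact z'.2.2 ((by simpa [aS] using h : j = (z' : Fin n))).symm
    · simp only [Sum.elim_inl, Sum.elim_inr] at h
      exfalso; fin_cases w'
      · exact z.2.1 (by simpa [aS] using h)
      · exact z.2.2 (by simpa [aS] using h)
    · simp only [Sum.elim_inr] at h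
      exact congrArg Sum.inr (Subtype.ext h)
  · intro u
    by_cases hu1 : u = i
    · exact ⟨Sum.inl 0, by simp [aS, hu1]⟩
    by_cases hu2 : u = j
    · exact ⟨Sum.inl 1, by simp [aS, hu2]⟩
    · exact ⟨Sum.inr ⟨u, hu1, hu2⟩, rfl⟩

lemma bij_c {n d : ℕ} (i j : Fin n) (hij : i ≠ j) :
    Function.Bijective (Sum.elim (pairEmb i j) (restEmb i j) :
      (Fin 2 × Fin d) ⊕ ({k : Fin n // k ≠ i ∧ k ≠ j} × Fin d) → Fin n × Fin d) := by
  have heq : (Sum.elim (pairEmb i j) (restEmb i j) :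
      (Fin 2 × Fin d) ⊕ ({k : Fin n // k ≠ i ∧ k ≠ j} × Fin d) → Fin n × Fin d)
      = (Prod.map (Sum.elim (aS i j) Subtype.val) (id : Fin d → Fin d)) ∘
        (Equiv.sumProdDistrib (Fin 2) {k : Fin n // k ≠ i ∧ k ≠ j} (Fin d)).symm := by
    funext s
    rcases s with ⟨t, k⟩ | ⟨z, k⟩ <;> rfl
  rw [heq]
  exact ((bij_s i j hij).prodMap Function.bijective_id).comp (Equiv.bijective _)


lemma trace_inv_le {d : ℕ} (A : Matrix (Fin d) (Fin d) ℝ) (c : ℝ) (hc : 0 < c)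
    (h : ∀ x : Fin d → ℝ, c * (x ⬝ᵥ x) ≤ x ⬝ᵥ (A *ᵥ x)) :
    A⁻¹.trace ≤ (d : ℝ) / c := by
  by_cases hu : IsUnit A.det
  · have hdiag : ∀ k, A⁻¹ k k ≤ 1 / c := by
      intro k
      set y := A⁻¹ *ᵥ Pi.single k 1 with hy
      have hAy : A *ᵥ y = Pi.single k 1 := by
        rw [hy, mulVec_mulVec, Matrix.mul_nonsing_inv _ hu, one_mulVec]
      have hyk : y k = A⁻¹ k k := by
        rw [hy]
        show (fun l => A⁻¹ k l) ⬝ᵥ Pi.single k 1 = A⁻¹ k k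
        rw [dotProduct_single, mul_one]
      have h1 : c * (y ⬝ᵥ y) ≤ y ⬝ᵥ (A *ᵥ y) := h y
      have h2 : y ⬝ᵥ (A *ᵥ y) = y k := by rw [hAy, dotProduct_single, mul_one]
      have h3 : y k * y k ≤ y ⬝ᵥ y :=
        Finset.single_le_sum (f := fun l => y l * y l)
          (fun l _ => mul_self_nonneg _) (Finset.mem_univ k)
      rw [← hyk]
      by_contra hgt
      push_neg at hgt
      have hykpos : 0 < y k := lt_trans (by positivity) hgt
      have e1 : c * (y k * y k) ≤ y k := by
        calc c * (y k * y k) ≤ c * (y ⬝ᵥ y) := mul_le_mul_of_nonneg_left h3 hc.le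
          _ ≤ y ⬝ᵥ (A *ᵥ y) := h1
          _ = y k := h2
      have e2 : 1 < y k * c := (div_lt_iff₀ hc).mp hgt
      nlinarith
    calc A⁻¹.trace = ∑ k, A⁻¹ k k := rfl
      _ ≤ ∑ _k : Fin d, 1 / c := Finset.sum_le_sum fun k _ => hdiag k
      _ = (d : ℝ) / c := by
          rw [Finset.sum_const, Finset.card_univ, Fintype.card_fin, nsmul_eq_mul]
          ring
  · rw [Matrix.nonsing_inv_apply_not_isUnit _ hu, Matrix.trace_zero]
    positivity

lemma lap_symm {n : ℕ} (W : Matrix (Fin n) (Fin n) ℝ) (hW : IsWeight W) :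
    (lap W)ᵀ = lap W := by
  have hsym : ∀ u v, W u v = W v u := fun u v => by
    have h := congrFun (congrFun hW.1 u) v
    rw [Matrix.transpose_apply] at h
    exact h.symm
  ext u v
  simp only [Matrix.transpose_apply, lap, Matrix.of_apply]
  by_cases h : u = v
  · subst h; rw [hsym]
  · rw [if_neg h, if_neg (Ne.symm h), hsym]

lemma connLap_symm {n : ℕ} {ι : Type} [Fintype ι] [DecidableEq ι]
    (W : Matrix (Fin n) (Fin n) ℝ) (hW : IsWeight W)
    (σ : Fin n → Fin n → Matrix ι ι ℝ) (hσ : IsSignature W σ) :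
    (connLap W σ)ᵀ = connLap W σ := by
  have hsym : ∀ u v, W u v = W v u := fun u v => by
    have h := congrFun (congrFun hW.1 u) v
    rw [Matrix.transpose_apply] at h
    exact h.symm
  ext p q
  simp only [Matrix.transpose_apply, connLap, Matrix.of_apply]
  congr 1
  · by_cases h : p = q
    · subst h; rfl
    · rw [if_neg h, if_neg (Ne.symm h)]
  · rcases lt_or_eq_of_le (hW.2.2 p.1 q.1) with h | h
    · rw [hsym q.1 p.1, hσ.2 p.1 q.1 h, Matrix.transpose_apply]
    · rw [← h, hsym q.1 p.1, ← h, zero_mul, zero_mul]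

lemma lap_row_one {n : ℕ} (W : Matrix (Fin n) (Fin n) ℝ) :
    lap W *ᵥ (fun _ => (1 : ℝ)) = 0 := by
  funext u
  show (fun k => lap W u k) ⬝ᵥ (fun _ => (1:ℝ)) = 0
  simp only [lap, Matrix.of_apply, dotProduct, mul_one, sub_mul, one_mul,
    Finset.sum_sub_distrib, Finset.sum_ite_eq, Finset.mem_univ, if_true]
  simp



section MoreSchur
variable {m p r : Type} [Fintype m] [Fintype p] [Fintype r]

lemma mulVec_glueV_a (M : Matrix m m ℝ) (a : p → m) (b : r → m)
    (hbij : Function.Bijective (Sum.elim a b)) (x : p → ℝ) (y : r → ℝ) (w : p) :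
    (M *ᵥ glueV a b hbij x y) (a w)
      = (M.submatrix a a *ᵥ x) w + (M.submatrix a b *ᵥ y) w :=
  mulVec_glueV M a b hbij x y (a w)

lemma mulVec_glueV_b (M : Matrix m m ℝ) (a : p → m) (b : r → m)
    (hbij : Function.Bijective (Sum.elim a b)) (x : p → ℝ) (y : r → ℝ) (z : r) :
    (M *ᵥ glueV a b hbij x y) (b z)
      = (M.submatrix b a *ᵥ x) z + (M.submatrix b b *ᵥ y) z :=
  mulVec_glueV M a b hbij x y (b z)

end MoreSchur

lemma sum_ite_factor {α : Type} [Fintype α] (P : Prop) [Decidable P] (F : α → ℝ) :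
    ∑ k, (if P then F k else 0) = if P then ∑ k, F k else 0 := by
  split <;> simp

lemma scalar_package {n : ℕ} (W : Matrix (Fin n) (Fin n) ℝ) (hW : IsWeight W)
    (hconn : (graphOf W).Connected) (i j : Fin n) (hij : i ≠ j) :
    ∃ c : ℝ, 0 < c ∧
      (∀ Y : Matrix (Fin n) (Fin n) ℝ, IsMP (lap W) Y → rOf Y i j = 1 / c) ∧
      (∀ g : Fin n → ℝ, c * ((g i - g j) * (g i - g j)) ≤ g ⬝ᵥ (lap W *ᵥ g)) := by
  have hLsym := lap_symm W hW
  have hbs := bij_s i j hij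
  set b : {k : Fin n // k ≠ i ∧ k ≠ j} → Fin n := Subtype.val with hbdef
  have hDpsd : ∀ z, 0 ≤ z ⬝ᵥ ((lap W).submatrix b b *ᵥ z) := by
    intro z
    have hq := quad_decomp (lap W) (aS i j) b hbs 0 z
    simp only [mulVec_zero, dotProduct_zero, zero_dotProduct, zero_add, add_zero] at hq
    rw [← hq]
    exact lap_psd W hW _
  have hDdet : IsUnit ((lap W).submatrix b b).det := by
    have ht : ((lap W).submatrix b b)ᵀ = (lap W).submatrix b b := by
      rw [transpose_submatrix, hLsym]
    have hherm : ((lap W).submatrix b b).IsHermitian := by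
      have h2 : ((lap W).submatrix b b)ᴴ = ((lap W).submatrix b b)ᵀ :=
        Matrix.conjTranspose_eq_transpose_of_trivial _
      unfold Matrix.IsHermitian
      rw [h2, ht]
    have hpd : ((lap W).submatrix b b).PosDef := by
      refine Matrix.PosDef.of_dotProduct_mulVec_pos hherm fun z hz => ?_
      rw [star_trivial]
      rcases lt_or_eq_of_le (hDpsd z) with h | h
      · exact h
      · exfalso
        have hq := quad_decomp (lap W) (aS i j) b hbs 0 z
        simp only [mulVec_zero, dotProduct_zero, zero_dotProduct, zero_add, add_zero] at hq
        have hzero : glueV (aS i j) b hbs 0 z ⬝ᵥ (lap W *ᵥ glueV (aS i j) b hbs 0 z) = 0 := by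
          rw [hq, ← h]
        have hconst := lap_zero_const W hW hconn _ hzero
        apply hz
        funext z'
        have h1 : glueV (aS i j) b hbs 0 z (b z') = z z' := glueV_b _ _ _ _ _ _
        have h2 : glueV (aS i j) b hbs 0 z (aS i j 0) = 0 := glueV_a _ _ _ _ _ _
        have h3 := hconst (b z') (aS i j 0)
        rw [h1, h2] at h3
        exact h3
    exact isUnit_iff_ne_zero.mpr hpd.det_pos.ne'
  set S := (lap W).submatrix (aS i j) (aS i j)
    - (lap W).submatrix (aS i j) b * ((lap W).submatrix b b)⁻¹ * (lap W).submatrix b (aS i j)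
    with hS
  -- row sums of the Laplacian, in block form
  have hglue1 : glueV (aS i j) b hbs (fun _ => (1:ℝ)) (fun _ => 1) = fun _ => (1:ℝ) := by
    funext q
    obtain ⟨s, rfl⟩ := hbs.surjective q
    cases s with
    | inl w => exact glueV_a _ _ _ _ _ _
    | inr z => exact glueV_b _ _ _ _ _ _
  have hrowa : ∀ w, ((lap W).submatrix (aS i j) (aS i j) *ᵥ (fun _ => (1:ℝ))) w
      + ((lap W).submatrix (aS i j) b *ᵥ (fun _ => (1:ℝ))) w = 0 := by
    intro w
    have h1 := mulVec_glueV_a (lap W) (aS i j) b hbs (fun _ => 1) (fun _ => 1) w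
    rw [hglue1, lap_row_one] at h1
    simp only [Pi.zero_apply] at h1
    exact h1.symm
  have hrowb : ∀ z, ((lap W).submatrix b (aS i j) *ᵥ (fun _ => (1:ℝ))) z
      + ((lap W).submatrix b b *ᵥ (fun _ => (1:ℝ))) z = 0 := by
    intro z
    have h1 := mulVec_glueV_b (lap W) (aS i j) b hbs (fun _ => 1) (fun _ => 1) z
    rw [hglue1, lap_row_one] at h1
    simp only [Pi.zero_apply] at h1
    exact h1.symm
  have hS1 : S *ᵥ (fun _ => (1:ℝ)) = 0 := by
    have hBt1 : (lap W).submatrix b (aS i j) *ᵥ (fun _ => (1:ℝ))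
        = -((lap W).submatrix b b *ᵥ (fun _ => 1)) := by
      funext z
      have := hrowb z
      simp only [Pi.neg_apply]
      linarith
    rw [hS, sub_mulVec]
    rw [← mulVec_mulVec, ← mulVec_mulVec, hBt1, mulVec_neg, mulVec_mulVec,
      Matrix.nonsing_inv_mul _ hDdet, one_mulVec, mulVec_neg]
    funext w
    have := hrowa w
    simp only [Pi.sub_apply, Pi.neg_apply, Pi.zero_apply]
    linarith
  have hSsym : Sᵀ = S := by
    have hA : ((lap W).submatrix (aS i j) (aS i j))ᵀ = (lap W).submatrix (aS i j) (aS i j) := by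
      rw [transpose_submatrix, hLsym]
    have hBt : ((lap W).submatrix b (aS i j))ᵀ = (lap W).submatrix (aS i j) b := by
      rw [transpose_submatrix, hLsym]
    have hB : ((lap W).submatrix (aS i j) b)ᵀ = (lap W).submatrix b (aS i j) := by
      rw [transpose_submatrix, hLsym]
    have hD : ((lap W).submatrix b b)ᵀ = (lap W).submatrix b b := by
      rw [transpose_submatrix, hLsym]
    rw [hS, transpose_sub, hA, transpose_mul, transpose_mul, transpose_nonsing_inv,
      hD, hBt, hB, Matrix.mul_assoc]
  set c := S 0 0 with hc
  have hsum0 : (S *ᵥ fun _ => (1:ℝ)) 0 = S 0 0 + S 0 1 := by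
    show (fun t => S 0 t) ⬝ᵥ (fun _ => (1:ℝ)) = _
    rw [dotProduct, Fin.sum_univ_two]
    ring
  have hsum1 : (S *ᵥ fun _ => (1:ℝ)) 1 = S 1 0 + S 1 1 := by
    show (fun t => S 1 t) ⬝ᵥ (fun _ => (1:ℝ)) = _
    rw [dotProduct, Fin.sum_univ_two]
    ring
  have h01 : S 0 1 = -c := by
    have := congrFun hS1 0
    rw [hsum0] at this
    simp only [Pi.zero_apply] at this
    rw [← hc] at this
    linarith
  have h10 : S 1 0 = -c := by
    have hsy : S 1 0 = S 0 1 := by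
      have := congrFun (congrFun hSsym 0) 1
      rw [Matrix.transpose_apply] at this
      exact this
    rw [hsy, h01]
  have h11 : S 1 1 = c := by
    have := congrFun hS1 1
    rw [hsum1] at this
    simp only [Pi.zero_apply] at this
    rw [h10] at this
    linarith
  have hSquad : ∀ y : Fin 2 → ℝ, y ⬝ᵥ (S *ᵥ y) = c * ((y 0 - y 1) * (y 0 - y 1)) := by
    intro y
    have e : y ⬝ᵥ (S *ᵥ y)
        = y 0 * (S 0 0 * y 0 + S 0 1 * y 1) + y 1 * (S 1 0 * y 0 + S 1 1 * y 1) := by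
      simp only [dotProduct, mulVec, Fin.sum_univ_two]
    rw [e, ← hc, h01, h10, h11]
    ring
  have hcpos : 0 < c := by
    obtain ⟨v, hva, hMa, hMb, hvq⟩ := schur_exists (lap W) (aS i j) b hbs hLsym hDdet
      (fun t => if t = 0 then 1 else 0)
    rw [← hS] at hvq
    have hq := hSquad (fun t => if t = 0 then 1 else 0)
    have hval : ((fun t : Fin 2 => if t = 0 then (1:ℝ) else 0) 0
        - (fun t : Fin 2 => if t = 0 then (1:ℝ) else 0) 1) = 1 := by norm_num
    rw [hval] at hq
    rw [hq] at hvq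
    have hnn := lap_psd W hW v
    rw [hvq] at hnn
    rcases lt_or_eq_of_le hnn with h | h
    · linarith
    · exfalso
      have hz : v ⬝ᵥ (lap W *ᵥ v) = 0 := by rw [hvq]; linarith
      have hconst := lap_zero_const W hW hconn v hz
      have hvi : v i = 1 := hva 0
      have hvj : v j = 0 := hva 1
      have := hconst i j
      rw [hvi, hvj] at this
      exact one_ne_zero this
  refine ⟨c, hcpos, ?_, ?_⟩
  · intro Y hY
    obtain ⟨v, hva, hMa, hMb, hvq⟩ := schur_exists (lap W) (aS i j) b hbs hLsym hDdet
      (fun t => if t = 0 then 1/c else 0)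
    have hSx0 : (S *ᵥ (fun t => if t = 0 then 1/c else 0)) 0 = 1 := by
      show (fun t => S 0 t) ⬝ᵥ _ = 1
      rw [dotProduct, Fin.sum_univ_two]
      norm_num [← hc]
      field_simp
    have hSx1 : (S *ᵥ (fun t => if t = 0 then 1/c else 0)) 1 = -1 := by
      show (fun t => S 1 t) ⬝ᵥ _ = -1
      rw [dotProduct, Fin.sum_univ_two]
      norm_num [h10]
      field_simp
    have hLv : lap W *ᵥ v = (Pi.single i 1 - Pi.single j 1 : Fin n → ℝ) := by
      funext q
      obtain ⟨s, rfl⟩ := hbs.surjective q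
      cases s with
      | inl w =>
        have hw : w = 0 ∨ w = 1 := by revert w; decide
        rcases hw with rfl | rfl
        · show (lap W *ᵥ v) (aS i j 0) = (Pi.single i 1 - Pi.single j 1 : Fin n → ℝ) i
          rw [hMa 0, ← hS, hSx0, Pi.sub_apply, Pi.single_eq_same,
            Pi.single_eq_of_ne hij]
          norm_num
        · show (lap W *ᵥ v) (aS i j 1) = (Pi.single i 1 - Pi.single j 1 : Fin n → ℝ) j
          rw [hMa 1, ← hS, hSx1, Pi.sub_apply, Pi.single_eq_same,
            Pi.single_eq_of_ne (Ne.symm hij)]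
          norm_num
      | inr z =>
        show (lap W *ᵥ v) (b z) = (Pi.single i 1 - Pi.single j 1 : Fin n → ℝ) (b z)
        rw [hMb z, Pi.sub_apply]
        have e1 : (Pi.single i (1:ℝ) : Fin n → ℝ) (b z) = 0 := by
          exact Pi.single_eq_of_ne z.2.1 1
        have e2 : (Pi.single j (1:ℝ) : Fin n → ℝ) (b z) = 0 := by
          exact Pi.single_eq_of_ne z.2.2 1
        rw [e1, e2]
        norm_num
    show (Pi.single i 1 - Pi.single j 1) ⬝ᵥ (Y *ᵥ (Pi.single i 1 - Pi.single j 1)) = 1 / c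
    rw [← hLv]
    have step1 : (lap W *ᵥ v) ⬝ᵥ (Y *ᵥ (lap W *ᵥ v)) = v ⬝ᵥ ((lap W * Y * lap W) *ᵥ v) := by
      rw [mulVec_mulVec]
      rw [show lap W *ᵥ v = v ᵥ* lap W from by
        conv_lhs => rw [← hLsym]
        rw [mulVec_transpose]]
      rw [← dotProduct_mulVec, mulVec_mulVec, ← Matrix.mul_assoc]
    rw [step1, hY.1, hLv, dotProduct_sub, dotProduct_single, dotProduct_single,
      mul_one, mul_one]
    have hvi : v i = 1/c := hva 0
    have hvj : v j = 0 := hva 1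
    rw [hvi, hvj, sub_zero]
  · intro g
    have hle := schur_psd_le (lap W) (aS i j) b hbs hLsym hDdet hDpsd g
    rw [← hS] at hle
    have hq := hSquad (g ∘ aS i j)
    rw [hq] at hle
    exact hle


theorem stmt_19 {n d : ℕ} (hd : 1 ≤ d) (W : Matrix (Fin n) (Fin n) ℝ)
    (hW : IsWeight W) (hconn : (graphOf W).Connected)
    (σ : Fin n → Fin n → Matrix (Fin d) (Fin d) ℝ) (hσ : IsSignature W σ)
    (i j : Fin n) (hij : i ≠ j)
    (Y : Matrix (Fin n) (Fin n) ℝ) (hY : IsMP (lap W) Y) :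
    rConn W σ i j ≤ rOf Y i j := by
  obtain ⟨c, hcpos, hrOf, hlb⟩ := scalar_package W hW hconn i j hij
  have hLcsym := connLap_symm W hW σ hσ
  have hbc := bij_c (d := d) i j hij
  have hDcpsd : ∀ z, 0 ≤ z ⬝ᵥ ((connLap W σ).submatrix (restEmb i j) (restEmb i j) *ᵥ z) := by
    intro z
    have hq := quad_decomp (connLap W σ) (pairEmb i j) (restEmb i j) hbc 0 z
    simp only [mulVec_zero, dotProduct_zero, zero_dotProduct, zero_add, add_zero] at hq
    rw [← hq]
    exact le_trans (lap_psd W hW _) (conn_ge_scalar W hW σ hσ _)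
  have hDcdet : IsUnit ((connLap W σ).submatrix (restEmb i j) (restEmb i j)).det := by
    have ht : ((connLap W σ).submatrix (restEmb i j) (restEmb i j))ᵀ
        = (connLap W σ).submatrix (restEmb i j) (restEmb i j) := by
      rw [transpose_submatrix, hLcsym]
    have hherm : ((connLap W σ).submatrix (restEmb i j) (restEmb i j)).IsHermitian := by
      have h2 : ((connLap W σ).submatrix (restEmb i j) (restEmb i j))ᴴ
          = ((connLap W σ).submatrix (restEmb i j) (restEmb i j))ᵀ :=
        Matrix.conjTranspose_eq_transpose_of_trivial _
      unfold Matrix.IsHermitian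
      rw [h2, ht]
    have hpd : ((connLap W σ).submatrix (restEmb i j) (restEmb i j)).PosDef := by
      refine Matrix.PosDef.of_dotProduct_mulVec_pos hherm fun z hz => ?_
      rw [star_trivial]
      rcases lt_or_eq_of_le (hDcpsd z) with h | h
      · exact h
      · exfalso
        have hq := quad_decomp (connLap W σ) (pairEmb i j) (restEmb i j) hbc 0 z
        simp only [mulVec_zero, dotProduct_zero, zero_dotProduct, zero_add, add_zero] at hq
        set f := glueV (pairEmb i j) (restEmb i j) hbc 0 z with hf
        have hq0 : f ⬝ᵥ (connLap W σ *ᵥ f) = 0 := by rw [hf, hq, ← h]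
        have hnz : nrm f ⬝ᵥ (lap W *ᵥ nrm f) = 0 :=
          le_antisymm (by rw [← hq0]; exact conn_ge_scalar W hW σ hσ f) (lap_psd W hW _)
        have hconst := lap_zero_const W hW hconn (nrm f) hnz
        have hni : nrm f i = 0 := by
          have hz0 : ∀ k, f (i, k) = 0 := by
            intro k
            have h3 : f (pairEmb i j ((0 : Fin 2), k)) = (0 : Fin 2 × Fin d → ℝ) (0, k) :=
              glueV_a _ _ _ _ _ _
            exact h3
          unfold nrm
          rw [show (∑ k, f (i, k) * f (i, k)) = 0 from
            Finset.sum_eq_zero fun k _ => by rw [hz0 k]; ring]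
          exact Real.sqrt_zero
        apply hz
        funext p
        obtain ⟨z', k⟩ := p
        have h4 : nrm f (z' : Fin n) = 0 := by rw [hconst (z' : Fin n) i, hni]
        have h5 := nrm_eq_zero f (z' : Fin n) h4 k
        have h6 : f (restEmb i j (z', k)) = z (z', k) := glueV_b _ _ _ _ _ _
        rw [show restEmb i j (z', k) = ((z' : Fin n), k) from rfl] at h6
        rw [← h6, h5]
        rfl
    exact isUnit_iff_ne_zero.mpr hpd.det_pos.ne'
  have hblock : ∀ t : Fin 2, ∀ x : Fin d → ℝ,
      c * (x ⬝ᵥ x) ≤ x ⬝ᵥ (blockOf (conduct W σ i j) t t *ᵥ x) := by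
    intro t x
    obtain ⟨f, hfa, hMa, hMb, hfq⟩ := schur_exists (connLap W σ) (pairEmb i j) (restEmb i j)
      hbc hLcsym hDcdet (fun p => if p.1 = t then x p.2 else 0)
    have hid : (fun p : Fin 2 × Fin d => if p.1 = t then x p.2 else 0) ⬝ᵥ
        (conduct W σ i j *ᵥ (fun p : Fin 2 × Fin d => if p.1 = t then x p.2 else 0))
        = x ⬝ᵥ (blockOf (conduct W σ i j) t t *ᵥ x) := by
      simp only [dotProduct, mulVec, blockOf, Matrix.of_apply, Fintype.sum_prod_type,
        ite_mul, zero_mul, mul_ite, mul_zero, sum_ite_factor, Finset.sum_ite_eq',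
        Finset.mem_univ, if_true]
    have hvals : (nrm f i - nrm f j) * (nrm f i - nrm f j) = x ⬝ᵥ x := by
      fin_cases t
      · have hfi : ∀ k, f (i, k) = x k := by
          intro k
          have h3 := hfa ((0 : Fin 2), k)
          simpa [pairEmb] using h3
        have hfj : ∀ k, f (j, k) = 0 := by
          intro k
          have h3 := hfa ((1 : Fin 2), k)
          simpa [pairEmb] using h3
        have h1 : nrm f j = 0 := by
          unfold nrm
          rw [show (∑ k, f (j, k) * f (j, k)) = 0 from
            Finset.sum_eq_zero fun k _ => by rw [hfj k]; ring]
          exact Real.sqrt_zero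
        have h2 : nrm f i * nrm f i = x ⬝ᵥ x := by
          rw [nrm_sq]
          exact Finset.sum_congr rfl fun k _ => by rw [hfi k]
        rw [h1, sub_zero]
        exact h2
      · have hfi : ∀ k, f (i, k) = 0 := by
          intro k
          have h3 := hfa ((0 : Fin 2), k)
          simpa [pairEmb] using h3
        have hfj : ∀ k, f (j, k) = x k := by
          intro k
          have h3 := hfa ((1 : Fin 2), k)
          simpa [pairEmb] using h3
        have h1 : nrm f i = 0 := by
          unfold nrm
          rw [show (∑ k, f (i, k) * f (i, k)) = 0 from
            Finset.sum_eq_zero fun k _ => by rw [hfi k]; ring]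
          exact Real.sqrt_zero
        have h2 : nrm f j * nrm f j = x ⬝ᵥ x := by
          rw [nrm_sq]
          exact Finset.sum_congr rfl fun k _ => by rw [hfj k]
        rw [h1, zero_sub]
        rw [show -nrm f j * -nrm f j = nrm f j * nrm f j by ring]
        exact h2
    calc c * (x ⬝ᵥ x) = c * ((nrm f i - nrm f j) * (nrm f i - nrm f j)) := by rw [hvals]
      _ ≤ nrm f ⬝ᵥ (lap W *ᵥ nrm f) := hlb (nrm f)
      _ ≤ f ⬝ᵥ (connLap W σ *ᵥ f) := conn_ge_scalar W hW σ hσ f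
      _ = x ⬝ᵥ (blockOf (conduct W σ i j) t t *ᵥ x) := by rw [hfq]; exact hid
  have ht0 := trace_inv_le (blockOf (conduct W σ i j) 0 0) c hcpos (hblock 0)
  have ht1 := trace_inv_le (blockOf (conduct W σ i j) 1 1) c hcpos (hblock 1)
  rw [hrOf Y hY]
  show (1 / (2 * (d : ℝ))) * (Matrix.trace ((blockOf (conduct W σ i j) 0 0)⁻¹)
      + Matrix.trace ((blockOf (conduct W σ i j) 1 1)⁻¹)) ≤ 1 / c
  have hd0 : (0:ℝ) < d := by
    have : (1:ℕ) ≤ d := hd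
    exact_mod_cast Nat.lt_of_lt_of_le Nat.zero_lt_one this
  calc (1 / (2 * (d : ℝ))) * (Matrix.trace ((blockOf (conduct W σ i j) 0 0)⁻¹)
      + Matrix.trace ((blockOf (conduct W σ i j) 1 1)⁻¹))
      ≤ (1 / (2 * (d : ℝ))) * ((d : ℝ) / c + (d : ℝ) / c) := by
        apply mul_le_mul_of_nonneg_left (add_le_add ht0 ht1) (by positivity)
    _ = 1 / c := by
        rw [← add_div]
        have h2 : ((d:ℝ) + (d:ℝ)) / (2 * (d:ℝ)) = 1 := by
          rw [div_eq_one_iff_eq (ne_of_gt (by positivity : (0:ℝ) < 2 * (d:ℝ)))]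
          ring
        calc (1 / (2 * (d:ℝ))) * (((d:ℝ) + (d:ℝ)) / c)
            = (((d:ℝ) + (d:ℝ)) / (2 * (d:ℝ))) * (1 / c) := by ring
          _ = 1 / c := by rw [h2, one_mul]
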